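/- Let G, H be groupoids and X : Hᵒᵖ × G ⥤ Type an (H,G)-bi-set, with double translation groupoid GXH and projections p : GXH ⥤ G, q : GXH ⥤ H. For objects γ of G and η of H, the map β from the coend over GXH of the functor (γ̄, x, η̄) ↦ Hom_G(γ̄, γ) × Hom_H(η, η̄) — i.e., from the quotient of Σ (objects (γ̄, x, η̄) of GXH), Hom_G(γ̄, γ) × Hom_H(η, η̄) by the equivalence relation generated by (g ∘ ĝ, h) ~ (g, ĥ ∘ h) for morphisms (ĝ, ĥ) : (γ̄', x', η̄') → (γ̄, x, η̄) of GXH — to X(η, γ), sending the class of (g, (γ̄, x, η̄), h) to g•x•h, is a bijection. -/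

import Mathlib

/-! Every class of the coend contains a representative with identity components: `(g, a, h)`
is related to `(𝟙, (γ, g • a.x • h, η), 𝟙)` through the morphism `(g, h⁻¹)` of `GXH`. Hence
`x ↦ [𝟙, (γ, x, η), 𝟙]` is inverse to `β`. -/

open CategoryTheory Opposite

universe w v₁ v₂ u₁ u₂

variable {G : Type u₁} {H : Type u₂} [Groupoid.{v₁} G] [Groupoid.{v₂} H]

namespace BiSet

variable (X : Hᵒᵖ × G ⥤ Type w)

/-- The left action `x ↦ g • x` of a bi-set `X : Hᵒᵖ × G ⥤ Type`. -/
def lAct {γ γ' : G} (g : γ ⟶ γ') (η : H) : X.obj (op η, γ) → X.obj (op η, γ') :=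
  X.map ((𝟙 (op η), g) : (op η, γ) ⟶ (op η, γ'))

/-- The right action `x ↦ x • h` of a bi-set `X : Hᵒᵖ × G ⥤ Type`. -/
def rAct {η' η : H} (h : η' ⟶ η) (γ : G) : X.obj (op η, γ) → X.obj (op η', γ) :=
  X.map ((h.op, 𝟙 γ) : (op η, γ) ⟶ (op η', γ))

variable {X}

theorem lAct_id {γ : G} (η : H) (x : X.obj (op η, γ)) : lAct X (𝟙 γ) η x = x := by
  unfold lAct
  rw [show ((𝟙 (op η), 𝟙 γ) : (op η, γ) ⟶ (op η, γ)) = 𝟙 (op η, γ) from rfl,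
    Functor.map_id_apply]

theorem rAct_id {η : H} (γ : G) (x : X.obj (op η, γ)) : rAct X (𝟙 η) γ x = x := by
  unfold rAct
  rw [show (((𝟙 η).op, 𝟙 γ) : (op η, γ) ⟶ (op η, γ)) = 𝟙 (op η, γ) by simp,
    Functor.map_id_apply]

theorem lAct_comp {γ γ' γ'' : G} (g : γ ⟶ γ') (g' : γ' ⟶ γ'') (η : H)
    (x : X.obj (op η, γ)) : lAct X (g ≫ g') η x = lAct X g' η (lAct X g η x) := by
  unfold lAct
  rw [show ((𝟙 (op η), g ≫ g') : (op η, γ) ⟶ (op η, γ'')) =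
      @CategoryStruct.comp (Hᵒᵖ × G) _ (op η, γ) (op η, γ') (op η, γ'') (𝟙 (op η), g)
        (𝟙 (op η), g')
      by simp, Functor.map_comp_apply]

theorem rAct_comp {η η' η'' : H} (h : η ⟶ η') (h' : η' ⟶ η'') (γ : G)
    (x : X.obj (op η'', γ)) : rAct X (h ≫ h') γ x = rAct X h γ (rAct X h' γ x) := by
  unfold rAct
  rw [show (((h ≫ h').op, 𝟙 γ) : (op η'', γ) ⟶ (op η, γ)) =
      @CategoryStruct.comp (Hᵒᵖ × G) _ (op η'', γ) (op η', γ) (op η, γ) (h'.op, 𝟙 γ)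
        (h.op, 𝟙 γ)
      by simp, Functor.map_comp_apply]

theorem lAct_rAct {γ γ' : G} {η' η : H} (g : γ ⟶ γ') (h : η' ⟶ η) (x : X.obj (op η, γ)) :
    lAct X g η' (rAct X h γ x) = rAct X h γ' (lAct X g η x) := by
  unfold lAct rAct
  rw [← FunctorToTypes.map_comp_apply, ← FunctorToTypes.map_comp_apply, prod_comp, prod_comp]
  simp

end BiSet

/-- Objects of the double translation groupoid `GXH` of a bi-set `X : Hᵒᵖ × G ⥤ Type`:
triples `(γ, x, η)` with `x ∈ X(η, γ)`. -/
structure DoubleTranslation (X : Hᵒᵖ × G ⥤ Type w) where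
  γ : G
  η : H
  x : X.obj (op η, γ)

namespace DoubleTranslation

variable {X : Hᵒᵖ × G ⥤ Type w}

/-- The double translation groupoid: morphisms `a ⟶ b` are pairs `(g, h)` with
`g : a.γ ⟶ b.γ`, `h : a.η ⟶ b.η` and `g • a.x = b.x • h`. -/
instance : Category (DoubleTranslation X) where
  Hom a b := {p : (a.γ ⟶ b.γ) × (a.η ⟶ b.η) //
      BiSet.lAct X p.1 a.η a.x = BiSet.rAct X p.2 b.γ b.x}
  id a := ⟨(𝟙 a.γ, 𝟙 a.η), by rw [BiSet.lAct_id, BiSet.rAct_id]⟩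
  comp {a b c} f g := ⟨(f.1.1 ≫ g.1.1, f.1.2 ≫ g.1.2), by
    rw [BiSet.lAct_comp, f.2, BiSet.lAct_rAct, g.2, ← BiSet.rAct_comp]⟩
  id_comp f := by apply Subtype.ext; dsimp; simp
  comp_id f := by apply Subtype.ext; dsimp; simp
  assoc f g h := by apply Subtype.ext; dsimp; simp

/-- The projection `q : GXH ⥤ H` of the double translation groupoid. -/
def toH (X : Hᵒᵖ × G ⥤ Type w) : DoubleTranslation X ⥤ H where
  obj a := a.η
  map f := f.1.2
  map_id _ := rfl
  map_comp _ _ := rfl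

end DoubleTranslation

namespace DoubleTranslation

variable {X : Hᵒᵖ × G ⥤ Type w}

/-- The relation on `Σ (a : GXH), Hom_G(a.γ, γ) × Hom_H(η, a.η)` generated by
`(ĝ ≫ g, h) ~ (g, h ≫ ĥ)` for morphisms `(ĝ, ĥ)` of `GXH`; its quotient is the coend over
`GXH` of `(γ̄, x, η̄) ↦ Hom_G(γ̄, γ) × Hom_H(η, η̄)`. -/
def BetaRel (X : Hᵒᵖ × G ⥤ Type w) (γ : G) (η : H) :
    (Σ a : DoubleTranslation X, (a.γ ⟶ γ) × (η ⟶ a.η)) →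
      (Σ a : DoubleTranslation X, (a.γ ⟶ γ) × (η ⟶ a.η)) → Prop :=
  fun e e' => ∃ k : e.1 ⟶ e'.1, e.2.1 = k.1.1 ≫ e'.2.1 ∧ e'.2.2 = e.2.2 ≫ k.1.2

/-- The map `(g, (γ̄, x, η̄), h) ↦ g • x • h` on representatives. -/
def betaZero (X : Hᵒᵖ × G ⥤ Type w) (γ : G) (η : H) :
    (Σ a : DoubleTranslation X, (a.γ ⟶ γ) × (η ⟶ a.η)) → X.obj (op η, γ) :=
  fun e => BiSet.lAct X e.2.1 η (BiSet.rAct X e.2.2 e.1.γ e.1.x)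

/-- The map `β` from the coend over `GXH` of `(γ̄, x, η̄) ↦ Hom_G(γ̄, γ) × Hom_H(η, η̄)`
to `X(η, γ)`, sending the class of `(g, (γ̄, x, η̄), h)` to `g • x • h`. -/
def beta (X : Hᵒᵖ × G ⥤ Type w) (γ : G) (η : H) :
    Quot (BetaRel X γ η) → X.obj (op η, γ) :=
  Quot.lift (betaZero X γ η) (by
    rintro ⟨a, g₁, h₁⟩ ⟨a', g₂, h₂⟩ ⟨k, hg, hh⟩
    dsimp only [betaZero] at *
    rw [hg, hh, BiSet.lAct_comp, BiSet.lAct_rAct, k.2, ← BiSet.rAct_comp])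

section

variable {γ : G} {η : H}

theorem _root_.BiSet.rAct_inv_rAct {η' : H} (h : η' ⟶ η) (x : X.obj (op η, γ)) :
    BiSet.rAct X (Groupoid.inv h) γ (BiSet.rAct X h γ x) = x := by
  rw [← BiSet.rAct_comp, Groupoid.inv_comp, BiSet.rAct_id]

def idRep (x : X.obj (op η, γ)) : Σ a : DoubleTranslation X, (a.γ ⟶ γ) × (η ⟶ a.η) :=
  ⟨⟨γ, η, x⟩, 𝟙 γ, 𝟙 η⟩

theorem betaZero_idRep (x : X.obj (op η, γ)) : betaZero X γ η (idRep x) = x := by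
  simp only [betaZero, idRep, BiSet.lAct_id, BiSet.rAct_id]

theorem betaRel_idRep_betaZero (e : Σ a : DoubleTranslation X, (a.γ ⟶ γ) × (η ⟶ a.η)) :
    BetaRel X γ η e (idRep (betaZero X γ η e)) := by
  obtain ⟨a, g, h⟩ := e
  have hk : BiSet.lAct X g a.η a.x =
      BiSet.rAct X (Groupoid.inv h) γ (BiSet.lAct X g η (BiSet.rAct X h a.γ a.x)) := by
    rw [← BiSet.lAct_rAct, BiSet.rAct_inv_rAct]
  exact ⟨⟨(g, Groupoid.inv h), hk⟩, (Category.comp_id g).symm, (Groupoid.comp_inv h).symm⟩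

end

/-- The map `β`, from the coend over the double translation groupoid `GXH` of
`(γ̄, x, η̄) ↦ Hom_G(γ̄, γ) × Hom_H(η, η̄)` to `X(η, γ)`, sending the class of
`(g, (γ̄, x, η̄), h)` to `g • x • h`, is a bijection. -/
theorem beta_bijective (X : Hᵒᵖ × G ⥤ Type w) (γ : G) (η : H) :
    Function.Bijective (beta X γ η) :=
  Function.bijective_iff_has_inverse.mpr ⟨fun x => Quot.mk _ (idRep x),
    fun q => Quot.inductionOn q fun e => (Quot.sound (betaRel_idRep_betaZero e)).symm,
    betaZero_idRep⟩

end DoubleTranslation
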